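/- Let X be a real Hilbert space, let m ≥ 2, and on the Hilbert product space X^m let R be the cyclic right-shift operator R(x_1, x_2, …, x_m) = (x_m, x_1, …, x_{m−1}) and M := Id − R. Then M is rectangular: for every x ∈ X^m and every y in the range of M, sup_{z ∈ X^m} ⟨x − z, Mz − y⟩ < +∞. -/
import Mathlib


open Filter Topology RealInnerProductSpace

theorem cyclic_shift_displacement_is_rectangular
    {X : Type*} [NormedAddCommGroup X] [InnerProductSpace ℝ X] [CompleteSpace X]
    {m : ℕ} (hm : 2 ≤ m)
    (R M : PiLp 2 (fun _ : Fin m => X) → PiLp 2 (fun _ : Fin m => X))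
    (hR : ∀ x : PiLp 2 (fun _ : Fin m => X), ∀ i : Fin m, R x i = x (i - ⟨1, by omega⟩))
    (hM : ∀ x : PiLp 2 (fun _ : Fin m => X), M x = x - R x) :
    ∀ x : PiLp 2 (fun _ : Fin m => X), ∀ y ∈ Set.range M,
      BddAbove (Set.range fun z : PiLp 2 (fun _ : Fin m => X) => ⟪x - z, M z - y⟫) := by
  intro x y hy
  obtain ⟨w, rfl⟩ := hy
  have hc : (1:ℕ) < m := by omega
  set c : Fin m := ⟨1, hc⟩ with hcdef
  refine ⟨(1/2) * ‖x - w‖^2, ?_⟩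
  rintro r ⟨z, rfl⟩
  set u : PiLp 2 (fun _ : Fin m => X) := z - w with hu
  set v : PiLp 2 (fun _ : Fin m => X) := M z - M w with hv
  have hvpt : ∀ i, v i = u i - u (i - c) := by
    intro i
    simp only [hv, hu, hM, hR, PiLp.sub_apply]
    abel
  have term : ∀ a b : X, ⟪a-b, a-b⟫ - 2*⟪a, a-b⟫ = ‖b‖^2 - ‖a‖^2 := by
    intro a b
    simp only [inner_sub_left, inner_sub_right, real_inner_self_eq_norm_sq]
    rw [real_inner_comm b a]; ring
  haveI : NeZero m := ⟨by omega⟩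
  have hsum : ∑ i, ‖u (i - c)‖^2 = ∑ i, ‖u i‖^2 :=
    Equiv.sum_comp (Equiv.subRight c) (fun i => ‖u i‖^2)
  have key : ⟪v, v⟫ - 2*⟪u, v⟫ = 0 := by
    rw [PiLp.inner_apply, PiLp.inner_apply, Finset.mul_sum, ← Finset.sum_sub_distrib]
    have h1 : ∀ i ∈ Finset.univ, ⟪v i, v i⟫ - 2*⟪u i, v i⟫ = ‖u (i-c)‖^2 - ‖u i‖^2 := by
      intro i _; rw [hvpt i]; exact term _ _
    rw [Finset.sum_congr rfl h1, Finset.sum_sub_distrib, hsum, sub_self]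
  have hxz : x - z = (x - w) - u := by rw [hu]; abel
  have hr : ⟪x - z, M z - M w⟫ = ⟪x - w, v⟫ - ⟪u, v⟫ := by
    rw [← hv, hxz, inner_sub_left]
  simp only [hr]
  have hns := norm_sub_sq_real (x - w) v
  have hnn := sq_nonneg ‖(x - w) - v‖
  have hvn : ⟪v, v⟫ = ‖v‖^2 := real_inner_self_eq_norm_sq v
  nlinarith [key, hvn]
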